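/- arXiv:1703.10662 — 6 statements merged into one kernel-verified Lean document; each statement's English description precedes it below -/
import Mathlib

section
/- Let μ, λ, γ, T_M be real parameters with μ > γ ≥ 0, λ > 0 and T_M > 1. Define τ : [0,1] → ℝ by τ(0) = 0 and τ(s) = (s^μ / (s^μ + (1-s)^λ)) · (T_M + (1-s)^λ / s^γ) for s ∈ (0,1]. Then τ is monotone increasing on [0,1], and τ(1) = T_M. -/
/-!
Dividing numerator and denominator by `s ^ μ` writes `τ(s) = (T_M + u) / (1 + u * w)` with
`u = (1 - s) ^ λ / s ^ γ` and `w = s ^ (γ - μ)`. On `(0, 1]` both `u ≥ 0` and `w ≥ 1` decrease,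
and `(T_M + u) / (1 + u * w)` decreases in `u` (as `T_M * w ≥ 1`) and in `w`, so `τ` increases;
`τ ≥ 0 = τ(0)` handles the endpoint.
-/

open Set

lemma div_one_add_mul_le_of_le_left {T u₁ u₂ w : ℝ} (hw : 0 ≤ w) (hTw : 1 ≤ T * w)
    (hu₂ : 0 ≤ u₂) (hu : u₂ ≤ u₁) :
    (T + u₁) / (1 + u₁ * w) ≤ (T + u₂) / (1 + u₂ * w) := by
  have hu₁ : 0 ≤ u₁ := hu₂.trans hu
  rw [div_le_div_iff₀ (by positivity) (by positivity)]
  nlinarith [mul_nonneg (sub_nonneg.2 hu) (sub_nonneg.2 hTw)]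

lemma div_one_add_mul_le_of_le_right {T u w₁ w₂ : ℝ} (hT : 0 ≤ T) (hu : 0 ≤ u) (hw₂ : 0 ≤ w₂)
    (hw : w₂ ≤ w₁) :
    (T + u) / (1 + u * w₁) ≤ (T + u) / (1 + u * w₂) :=
  div_le_div_of_nonneg_left (by positivity) (by positivity) (by gcongr)

lemma monotoneOn_div_one_add_mul {α : Type*} [Preorder α] {s : Set α} {T : ℝ} {u w : α → ℝ}
    (hT : 1 ≤ T) (hu : AntitoneOn u s) (hw : AntitoneOn w s) (hu₀ : ∀ x ∈ s, 0 ≤ u x)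
    (hw₁ : ∀ x ∈ s, 1 ≤ w x) :
    MonotoneOn (fun x => (T + u x) / (1 + u x * w x)) s := by
  intro a ha b hb hab
  have hwa : 1 ≤ w a := hw₁ a ha
  calc (T + u a) / (1 + u a * w a)
      ≤ (T + u b) / (1 + u b * w a) :=
        div_one_add_mul_le_of_le_left (by linarith) (by nlinarith) (hu₀ b hb) (hu ha hb hab)
    _ ≤ (T + u b) / (1 + u b * w b) :=
        div_one_add_mul_le_of_le_right (by linarith) (hu₀ b hb) (by linarith [hw₁ b hb])
          (hw ha hb hab)

lemma div_add_mul_add_div_eq {a b c T : ℝ} (ha : 0 < a) (hb : 0 ≤ b) (hc : c ≠ 0) :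
    a / (a + b) * (T + b / c) = (T + b / c) / (1 + b / c * (c / a)) := by
  have hab : 0 < a + b := by linarith
  field_simp

lemma antitoneOn_one_sub_rpow_div_rpow {lam γ : ℝ} (hlam : 0 ≤ lam) (hγ : 0 ≤ γ) :
    AntitoneOn (fun s : ℝ => (1 - s) ^ lam / s ^ γ) (Ioc 0 1) := by
  intro a ha b hb hab
  exact div_le_div₀ (Real.rpow_nonneg (by linarith [ha.2]) lam)
    (Real.rpow_le_rpow (by linarith [hb.2]) (by linarith) hlam)
    (Real.rpow_pos_of_pos ha.1 γ) (Real.rpow_le_rpow ha.1.le hab hγ)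

/-- Hypothesis (H2): the relaxation parameter
`τ(s) = s^μ/(s^μ + (1-s)^λ) · (T_M + (1-s)^λ/s^γ)` for `s ∈ (0,1]`, with `τ(0) = 0`,
where `μ > γ ≥ 0`, `λ > 0` and `T_M > 1`, is monotone increasing on `[0,1]`
and satisfies `τ(1) = T_M`. -/
theorem tau_monotoneOn_and_value_at_one
    (μ lam γ TM : ℝ) (hγ : 0 ≤ γ) (hγμ : γ < μ) (hlam : 0 < lam) (hTM : 1 < TM)
    (τ : ℝ → ℝ)
    (hτ0 : τ 0 = 0)
    (hτ : ∀ s ∈ Set.Ioc (0:ℝ) 1,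
      τ s = (s ^ μ / (s ^ μ + (1 - s) ^ lam)) * (TM + (1 - s) ^ lam / s ^ γ)) :
    MonotoneOn τ (Set.Icc 0 1) ∧ τ 1 = TM := by
  set u : ℝ → ℝ := fun s => (1 - s) ^ lam / s ^ γ
  have hu₀ : ∀ s ∈ Ioc (0 : ℝ) 1, 0 ≤ u s := fun s hs =>
    div_nonneg (Real.rpow_nonneg (by linarith [hs.2]) lam) (Real.rpow_nonneg hs.1.le γ)
  have hτ_eq : ∀ s ∈ Ioc (0 : ℝ) 1, τ s = (TM + u s) / (1 + u s * s ^ (γ - μ)) := fun s hs => by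
    rw [hτ s hs, Real.rpow_sub hs.1, div_add_mul_add_div_eq (Real.rpow_pos_of_pos hs.1 μ)
      (Real.rpow_nonneg (by linarith [hs.2]) lam) (Real.rpow_pos_of_pos hs.1 γ).ne', mul_div]
  have hw_anti : AntitoneOn (fun s : ℝ => s ^ (γ - μ)) (Ioc 0 1) :=
    (Real.antitoneOn_rpow_Ioi_of_exponent_nonpos (by linarith)).mono Ioc_subset_Ioi_self
  have hw_one : ∀ s ∈ Ioc (0 : ℝ) 1, 1 ≤ s ^ (γ - μ) := fun s hs =>
    Real.one_le_rpow_of_pos_of_le_one_of_nonpos hs.1 hs.2 (by linarith)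
  have hmono : MonotoneOn τ (Ioc 0 1) :=
    (monotoneOn_div_one_add_mul hTM.le (antitoneOn_one_sub_rpow_div_rpow hlam.le hγ) hw_anti
      hu₀ hw_one).congr fun s hs => (hτ_eq s hs).symm
  have hτ_nonneg : ∀ s ∈ Ioc (0 : ℝ) 1, τ 0 ≤ τ s := fun s hs => by
    rw [hτ0, hτ_eq s hs]
    exact div_nonneg (by linarith [hu₀ s hs])
      (add_nonneg zero_le_one (mul_nonneg (hu₀ s hs) (zero_le_one.trans (hw_one s hs))))
  refine ⟨?_, ?_⟩
  · rw [← Ioc_insert_left zero_le_one, monotoneOn_insert_iff]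
    exact ⟨fun s hs hs0 => absurd hs.1 hs0.not_gt, fun s hs _ => hτ_nonneg s hs, hmono⟩
  · rw [hτ 1 ⟨one_pos, le_rfl⟩]
    simp [Real.zero_rpow hlam.ne']
end

section
/- Let μ, λ, γ, β1, β2, T_M be real parameters with μ > γ ≥ β1 > 0, λ ≥ β2 > 0 and T_M > 1, and let g, h : [0,1] → ℝ be continuous and strictly positive. With a(s) = s^μ (1-s)^λ / (s^μ + (1-s)^λ), τ(s) = (s^μ/(s^μ + (1-s)^λ)) · (T_M + (1-s)^λ/s^γ), and -P_c'(s) = g(s)/s^{β1} + h(s)/(1-s)^{β2} for s ∈ (0,1), the function s ↦ a(s) · P_c'(s) / τ(s) is bounded on (0,1), i.e. sup_{s ∈ (0,1)} |a(s) P_c'(s) / τ(s)| < +∞. -/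
/-!
After cancelling `s^μ`, `a · P_c' / τ = -(1-s)^λ (g/s^{β₁} + h/(1-s)^{β₂}) / (T_M + (1-s)^λ/s^γ)`.
Near `s = 0` the denominator is at least `(1-s)^λ/s^γ`, which absorbs `s^{-β₁}` since `β₁ ≤ γ`;
near `s = 1` the factor `(1-s)^λ` absorbs `(1-s)^{-β₂}` since `β₂ ≤ λ`, while the denominator stays
above `T_M`. Hence the ratio is bounded by `sup |g| + sup |h| / T_M`.
-/

open Real

theorem mul_div_add_mul_div_div_mul_eq {x y : ℝ} (hx : x ≠ 0) (hxy : x + y ≠ 0) (p E : ℝ) :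
    x * y / (x + y) * p / (x / (x + y) * E) = y * p / E := by
  rcases eq_or_ne E 0 with rfl | hE
  · simp
  · field_simp

theorem div_rpow_mul_add_div_rpow_le_one {s β γ y T : ℝ} (hs0 : 0 < s) (hs1 : s ≤ 1)
    (hβγ : β ≤ γ) (hy : 0 ≤ y) (hT : 0 ≤ T) :
    y / (s ^ β * (T + y / s ^ γ)) ≤ 1 := by
  have hsγ : 0 < s ^ γ := rpow_pos_of_pos hs0 γ
  refine div_le_one_of_le₀ ?_ (by positivity)
  calc y = s ^ γ * (y / s ^ γ) := by field_simp
    _ ≤ s ^ β * (y / s ^ γ) :=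
      mul_le_mul_of_nonneg_right (rpow_le_rpow_of_exponent_ge hs0 hs1 hβγ) (by positivity)
    _ ≤ s ^ β * (T + y / s ^ γ) := by gcongr; linarith

theorem rpow_div_rpow_mul_add_le_inv {t β lam T z : ℝ} (ht0 : 0 < t) (ht1 : t ≤ 1)
    (hβlam : β ≤ lam) (hT : 0 < T) (hz : 0 ≤ z) :
    t ^ lam / (t ^ β * (T + z)) ≤ T⁻¹ := by
  have htβ : 0 < t ^ β := rpow_pos_of_pos ht0 β
  calc t ^ lam / (t ^ β * (T + z)) ≤ t ^ β / (t ^ β * T) :=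
        div_le_div₀ htβ.le (rpow_le_rpow_of_exponent_ge ht0 ht1 hβlam) (by positivity)
          (by gcongr; linarith)
    _ = T⁻¹ := by field_simp

theorem abs_one_sub_rpow_mul_add_div_le {s lam γ β1 β2 T G H : ℝ} (hs : s ∈ Set.Ioo (0 : ℝ) 1)
    (hβ1γ : β1 ≤ γ) (hβ2lam : β2 ≤ lam) (hT : 0 < T) :
    |(1 - s) ^ lam * (G / s ^ β1 + H / (1 - s) ^ β2) / (T + (1 - s) ^ lam / s ^ γ)|
      ≤ |G| + |H| / T := by
  obtain ⟨hs0, hs1⟩ := hs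
  have h1s : 0 < 1 - s := by linarith
  have h1l : 0 < (1 - s) ^ lam := rpow_pos_of_pos h1s lam
  have hsβ1 : 0 < s ^ β1 := rpow_pos_of_pos hs0 β1
  have h1β2 : 0 < (1 - s) ^ β2 := rpow_pos_of_pos h1s β2
  have hz : 0 ≤ (1 - s) ^ lam / s ^ γ := (div_pos h1l (rpow_pos_of_pos hs0 γ)).le
  have hw1 := div_rpow_mul_add_div_rpow_le_one hs0 hs1.le hβ1γ h1l.le hT.le
  have hw2 := rpow_div_rpow_mul_add_le_inv h1s (by linarith) hβ2lam hT hz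
  set E := T + (1 - s) ^ lam / s ^ γ
  have hE : 0 < E := by positivity
  calc |(1 - s) ^ lam * (G / s ^ β1 + H / (1 - s) ^ β2) / E|
      = |G * ((1 - s) ^ lam / (s ^ β1 * E)) + H * ((1 - s) ^ lam / ((1 - s) ^ β2 * E))| := by
        congr 1; field_simp
    _ ≤ |G| * ((1 - s) ^ lam / (s ^ β1 * E)) + |H| * ((1 - s) ^ lam / ((1 - s) ^ β2 * E)) := by
        refine (abs_add_le _ _).trans ?_
        rw [abs_mul, abs_mul, abs_of_pos (div_pos h1l (mul_pos hsβ1 hE)),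
          abs_of_pos (div_pos h1l (mul_pos h1β2 hE))]
    _ ≤ |G| * 1 + |H| * T⁻¹ := by gcongr
    _ = |G| + |H| / T := by ring

theorem a_Pc_over_tau_bounded_general
    (μ lam γ β1 β2 TM : ℝ)
    (hβ1γ : β1 ≤ γ)
    (hβ2lam : β2 ≤ lam) (hTM : 1 < TM)
    (g h : ℝ → ℝ)
    (hg : ContinuousOn g (Set.Icc 0 1)) (hh : ContinuousOn h (Set.Icc 0 1))
    (a τ Pc' : ℝ → ℝ)
    (ha : ∀ s ∈ Set.Ioo (0:ℝ) 1,
      a s = s ^ μ * (1 - s) ^ lam / (s ^ μ + (1 - s) ^ lam))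
    (hτ : ∀ s ∈ Set.Ioo (0:ℝ) 1,
      τ s = (s ^ μ / (s ^ μ + (1 - s) ^ lam)) * (TM + (1 - s) ^ lam / s ^ γ))
    (hPc : ∀ s ∈ Set.Ioo (0:ℝ) 1,
      -Pc' s = g s / s ^ β1 + h s / (1 - s) ^ β2) :
    ∃ C : ℝ, ∀ s ∈ Set.Ioo (0:ℝ) 1, |a s * Pc' s / τ s| ≤ C := by
  obtain ⟨Mg, hMg⟩ := isCompact_Icc.exists_bound_of_continuousOn hg
  obtain ⟨Mh, hMh⟩ := isCompact_Icc.exists_bound_of_continuousOn hh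
  have hTM0 : 0 < TM := by linarith
  refine ⟨Mg + Mh / TM, fun s hs => ?_⟩
  have hsμ : 0 < s ^ μ := rpow_pos_of_pos hs.1 μ
  have h1s : 0 < (1 - s) ^ lam := rpow_pos_of_pos (by linarith [hs.2]) lam
  rw [ha s hs, hτ s hs, mul_div_add_mul_div_div_mul_eq hsμ.ne' (by positivity),
    neg_eq_iff_eq_neg.mp (hPc s hs), mul_neg, neg_div, abs_neg]
  calc _ ≤ |g s| + |h s| / TM := abs_one_sub_rpow_mul_add_div_le hs hβ1γ hβ2lam hTM0
    _ ≤ Mg + Mh / TM := by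
      gcongr
      · exact hMg s (Set.Ioo_subset_Icc_self hs)
      · exact hMh s (Set.Ioo_subset_Icc_self hs)

/-- Under hypotheses (H1)–(H3) of the paper, with
`a(s) = s^μ(1-s)^λ/(s^μ+(1-s)^λ)`,
`τ(s) = s^μ/(s^μ+(1-s)^λ)·(T_M + (1-s)^λ/s^γ)` and
`-P_c'(s) = g(s)/s^{β₁} + h(s)/(1-s)^{β₂}` on `(0,1)`,
the quantity `a·P_c'/τ` is bounded on `(0,1)`. -/
theorem a_Pc_over_tau_bounded
    (μ lam γ β1 β2 TM : ℝ)
    (hβ1 : 0 < β1) (hβ1γ : β1 ≤ γ) (hγμ : γ < μ)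
    (hβ2 : 0 < β2) (hβ2lam : β2 ≤ lam) (hTM : 1 < TM)
    (g h : ℝ → ℝ)
    (hg : ContinuousOn g (Set.Icc 0 1)) (hh : ContinuousOn h (Set.Icc 0 1))
    (hgpos : ∀ s ∈ Set.Icc (0:ℝ) 1, 0 < g s)
    (hhpos : ∀ s ∈ Set.Icc (0:ℝ) 1, 0 < h s)
    (a τ Pc' : ℝ → ℝ)
    (ha : ∀ s ∈ Set.Ioo (0:ℝ) 1,
      a s = s ^ μ * (1 - s) ^ lam / (s ^ μ + (1 - s) ^ lam))
    (hτ : ∀ s ∈ Set.Ioo (0:ℝ) 1,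
      τ s = (s ^ μ / (s ^ μ + (1 - s) ^ lam)) * (TM + (1 - s) ^ lam / s ^ γ))
    (hPc : ∀ s ∈ Set.Ioo (0:ℝ) 1,
      -Pc' s = g s / s ^ β1 + h s / (1 - s) ^ β2) :
    ∃ C : ℝ, ∀ s ∈ Set.Ioo (0:ℝ) 1, |a s * Pc' s / τ s| ≤ C :=
  a_Pc_over_tau_bounded_general μ lam γ β1 β2 TM hβ1γ hβ2lam hTM g h hg hh a τ Pc' ha hτ hPc
end

section
/- Let μ, λ, γ, T_M be real parameters with μ > γ > 2, λ > 2 and T_M > 1. With a(s) = s^μ (1-s)^λ / (s^μ + (1-s)^λ) and τ(s) = (s^μ/(s^μ + (1-s)^λ)) · (T_M + (1-s)^λ/s^γ) for s ∈ (0,1), the following three functions are bounded on (0,1): s ↦ a(s) τ'(s)/τ(s), s ↦ √(a(s)) τ'(s)/τ(s), and s ↦ a(s) τ(s)². -/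
/-!
Write `p = s^μ`, `q = (1-s)^λ`, so that `a = pq/(p+q)` and `τ = N/D` with `N = T_M p + s^(μ-γ) q`
and `D = p + q`. Then `τ'/τ = N'/N - D'/D`, and `√a ≤ min (s^(μ/2)) ((1-s)^(λ/2))`. Because
`μ, λ ≥ 2`, multiplying by `√a` turns every singular factor `s^(β-1)` or `(1-s)^(λ-1)` of `N'` and
`D'` back into `s^β` or `(1-s)^λ`, whence `√a |N'| ≤ C N` and `√a |D'| ≤ C D`. The bound for
`a τ'/τ` follows from `a ≤ √a`, and the one for `a τ²` from `a ≤ 1` and `τ ≤ T_M`.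
-/

open Set Filter Topology Real

theorem HasDerivAt.div_eq_sub_of_eventuallyEq_div {f N D : ℝ → ℝ} {f' N' D' s : ℝ}
    (hf : HasDerivAt f f' s) (hfND : f =ᶠ[𝓝 s] fun x => N x / D x) (hN : HasDerivAt N N' s)
    (hD : HasDerivAt D D' s) (hN0 : N s ≠ 0) (hD0 : D s ≠ 0) :
    f' / f s = N' / N s - D' / D s := by
  rw [hf.unique ((hN.div hD hD0).congr_of_eventuallyEq hfND), hfND.eq_of_nhds]
  field_simp

lemma abs_mul_sub_div_le {w N D N' D' c₁ c₂ : ℝ} (hw : 0 ≤ w) (hN : 0 < N) (hD : 0 < D)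
    (hN' : w * |N'| ≤ c₁ * N) (hD' : w * |D'| ≤ c₂ * D) :
    |w * (N' / N - D' / D)| ≤ c₁ + c₂ :=
  calc |w * (N' / N - D' / D)| ≤ w * |N'| / N + w * |D'| / D := by
        rw [abs_mul, abs_of_nonneg hw, mul_div_assoc, mul_div_assoc, ← mul_add]
        gcongr
        refine (abs_sub _ _).trans_eq ?_
        rw [abs_div, abs_div, abs_of_pos hN, abs_of_pos hD]
    _ ≤ c₁ + c₂ := add_le_add ((div_le_iff₀ hN).2 hN') ((div_le_iff₀ hD).2 hD')

lemma abs_mul_le_abs_sqrt_mul {a : ℝ} (ha0 : 0 ≤ a) (ha1 : a ≤ 1) (x : ℝ) :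
    |a * x| ≤ |√a * x| := by
  rw [abs_mul, abs_mul, abs_of_nonneg ha0, abs_of_nonneg (sqrt_nonneg a)]
  gcongr
  exact le_sqrt_self_iff.2 ha1

lemma abs_mul_sq_le {a t T : ℝ} (ha0 : 0 ≤ a) (ha1 : a ≤ 1) (ht0 : 0 ≤ t) (htT : t ≤ T) :
    |a * t ^ 2| ≤ T ^ 2 :=
  calc |a * t ^ 2| = a * t ^ 2 := abs_of_nonneg (by positivity)
    _ ≤ 1 * T ^ 2 := by gcongr
    _ = T ^ 2 := one_mul _

lemma mul_div_add_le_right {p q : ℝ} (hp : 0 < p) (hq : 0 ≤ q) : p * q / (p + q) ≤ q := by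
  rw [div_le_iff₀ (by positivity)]
  nlinarith

lemma mul_div_add_le_left {p q : ℝ} (hp : 0 ≤ p) (hq : 0 < q) : p * q / (p + q) ≤ p := by
  rw [mul_comm, add_comm]
  exact mul_div_add_le_right hq hp

lemma sqrt_rpow_eq_rpow_half {x : ℝ} (hx : 0 ≤ x) (α : ℝ) : √(x ^ α) = x ^ (α / 2) := by
  rw [sqrt_eq_rpow, ← rpow_mul hx]
  ring_nf

lemma mul_rpow_sub_one_le_rpow {x w c : ℝ} (β : ℝ) (hx0 : 0 < x) (hx1 : x ≤ 1) (hc : 1 ≤ c)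
    (hw : w ≤ x ^ c) : w * x ^ (β - 1) ≤ x ^ β :=
  calc w * x ^ (β - 1) ≤ x ^ c * x ^ (β - 1) := by gcongr
    _ = x ^ (c + (β - 1)) := (rpow_add hx0 _ _).symm
    _ ≤ x ^ β := rpow_le_rpow_of_exponent_ge hx0 hx1 (by linarith)

noncomputable def capillary (μ lam s : ℝ) : ℝ :=
  s ^ μ * (1 - s) ^ lam / (s ^ μ + (1 - s) ^ lam)

noncomputable def tauDen (μ lam s : ℝ) : ℝ := s ^ μ + (1 - s) ^ lam

noncomputable def tauNum (μ lam γ TM s : ℝ) : ℝ := TM * s ^ μ + s ^ (μ - γ) * (1 - s) ^ lam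

section

variable {μ lam γ TM s w : ℝ}

lemma tauDen_pos (hs : s ∈ Ioo 0 1) : 0 < tauDen μ lam s := by
  have := sub_pos.2 hs.2
  have := hs.1
  unfold tauDen
  positivity

lemma tauNum_pos (hTM : 0 ≤ TM) (hs : s ∈ Ioo 0 1) : 0 < tauNum μ lam γ TM s := by
  have := sub_pos.2 hs.2
  have := hs.1
  unfold tauNum
  positivity

lemma tauNum_div_tauDen_le (hγμ : γ ≤ μ) (hTM : 1 ≤ TM) (hs : s ∈ Ioo 0 1) :
    tauNum μ lam γ TM s / tauDen μ lam s ≤ TM := by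
  have hr : s ^ (μ - γ) ≤ 1 := rpow_le_one hs.1.le hs.2.le (by linarith)
  have hq : 0 < (1 - s) ^ lam := rpow_pos_of_pos (sub_pos.2 hs.2) _
  rw [div_le_iff₀ (tauDen_pos hs)]
  unfold tauNum tauDen
  nlinarith

lemma tau_eq_tauNum_div_tauDen (hs : s ∈ Ioo 0 1) :
    s ^ μ / (s ^ μ + (1 - s) ^ lam) * (TM + (1 - s) ^ lam / s ^ γ) =
      tauNum μ lam γ TM s / tauDen μ lam s := by
  have hD := (tauDen_pos (μ := μ) (lam := lam) hs).ne'
  have hsγ : s ^ γ ≠ 0 := (rpow_pos_of_pos hs.1 γ).ne'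
  unfold tauNum tauDen at *
  rw [rpow_sub hs.1]
  field_simp

lemma hasDerivAt_one_sub_rpow (hs : s < 1) :
    HasDerivAt (fun x => (1 - x) ^ lam) (-(lam * (1 - s) ^ (lam - 1))) s :=
  (((hasDerivAt_id' s).const_sub 1).rpow_const (p := lam) (Or.inl (sub_pos.2 hs).ne')).congr_deriv
    (by ring)

lemma hasDerivAt_tauDen (hs : s ∈ Ioo 0 1) :
    HasDerivAt (tauDen μ lam) (μ * s ^ (μ - 1) - lam * (1 - s) ^ (lam - 1)) s :=
  ((hasDerivAt_rpow_const (p := μ) (Or.inl hs.1.ne')).add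
    (hasDerivAt_one_sub_rpow hs.2)).congr_deriv (sub_eq_add_neg _ _).symm

lemma hasDerivAt_tauNum (hs : s ∈ Ioo 0 1) :
    HasDerivAt (tauNum μ lam γ TM)
      (TM * (μ * s ^ (μ - 1)) + ((μ - γ) * s ^ (μ - γ - 1) * (1 - s) ^ lam
        - s ^ (μ - γ) * (lam * (1 - s) ^ (lam - 1)))) s :=
  (((hasDerivAt_rpow_const (p := μ) (Or.inl hs.1.ne')).const_mul TM).add
    ((hasDerivAt_rpow_const (p := μ - γ) (Or.inl hs.1.ne')).mul
      (hasDerivAt_one_sub_rpow hs.2))).congr_deriv (by ring)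

lemma mul_abs_deriv_tauDen_le (hμ : 2 ≤ μ) (hlam : 2 ≤ lam) (hs : s ∈ Ioo 0 1) (hw0 : 0 ≤ w)
    (hwμ : w ≤ s ^ (μ / 2)) (hwlam : w ≤ (1 - s) ^ (lam / 2)) :
    w * |μ * s ^ (μ - 1) - lam * (1 - s) ^ (lam - 1)| ≤ (μ + lam) * tauDen μ lam s := by
  have ht := sub_pos.2 hs.2
  have hs' := mul_rpow_sub_one_le_rpow μ hs.1 hs.2.le (by linarith) hwμ
  have ht' := mul_rpow_sub_one_le_rpow lam ht (by linarith [hs.1]) (by linarith) hwlam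
  have hp : 0 < s ^ μ := rpow_pos_of_pos hs.1 _
  have hq : 0 < (1 - s) ^ lam := rpow_pos_of_pos ht _
  calc w * |μ * s ^ (μ - 1) - lam * (1 - s) ^ (lam - 1)|
        ≤ w * (μ * s ^ (μ - 1) + lam * (1 - s) ^ (lam - 1)) := by
          gcongr
          rw [abs_le]
          constructor <;> nlinarith [rpow_pos_of_pos hs.1 (μ - 1), rpow_pos_of_pos ht (lam - 1)]
    _ = μ * (w * s ^ (μ - 1)) + lam * (w * (1 - s) ^ (lam - 1)) := by ring
    _ ≤ μ * s ^ μ + lam * (1 - s) ^ lam := by gcongr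
    _ ≤ (μ + lam) * tauDen μ lam s := by unfold tauDen; nlinarith

lemma mul_abs_deriv_tauNum_le (hμ : 2 ≤ μ) (hlam : 2 ≤ lam) (hγμ : γ ≤ μ) (hTM : 0 ≤ TM)
    (hs : s ∈ Ioo 0 1) (hw0 : 0 ≤ w) (hwμ : w ≤ s ^ (μ / 2)) (hwlam : w ≤ (1 - s) ^ (lam / 2)) :
    w * |TM * (μ * s ^ (μ - 1)) + ((μ - γ) * s ^ (μ - γ - 1) * (1 - s) ^ lam
        - s ^ (μ - γ) * (lam * (1 - s) ^ (lam - 1)))|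
      ≤ (2 * μ - γ + lam) * tauNum μ lam γ TM s := by
  have ht := sub_pos.2 hs.2
  have hs₁ := mul_rpow_sub_one_le_rpow μ hs.1 hs.2.le (by linarith) hwμ
  have hs₂ := mul_rpow_sub_one_le_rpow (μ - γ) hs.1 hs.2.le (by linarith) hwμ
  have ht' := mul_rpow_sub_one_le_rpow lam ht (by linarith [hs.1]) (by linarith) hwlam
  have hp := rpow_pos_of_pos hs.1 μ
  have hq := rpow_pos_of_pos ht lam
  have hr := rpow_pos_of_pos hs.1 (μ - γ)
  have hA : 0 ≤ TM * (μ * s ^ (μ - 1)) := by have := rpow_pos_of_pos hs.1 (μ - 1); positivity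
  have hB : 0 ≤ (μ - γ) * s ^ (μ - γ - 1) * (1 - s) ^ lam := by
    have := rpow_pos_of_pos hs.1 (μ - γ - 1); have := sub_nonneg.2 hγμ; positivity
  have hC : 0 ≤ s ^ (μ - γ) * (lam * (1 - s) ^ (lam - 1)) := by
    have := rpow_pos_of_pos ht (lam - 1); positivity
  calc _ ≤ w * (TM * (μ * s ^ (μ - 1)) + ((μ - γ) * s ^ (μ - γ - 1) * (1 - s) ^ lam
        + s ^ (μ - γ) * (lam * (1 - s) ^ (lam - 1)))) := by
          gcongr
          rw [abs_le]
          constructor <;> linarith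
    _ = TM * μ * (w * s ^ (μ - 1)) + (μ - γ) * (1 - s) ^ lam * (w * s ^ (μ - γ - 1))
        + lam * s ^ (μ - γ) * (w * (1 - s) ^ (lam - 1)) := by ring
    _ ≤ TM * μ * s ^ μ + (μ - γ) * (1 - s) ^ lam * s ^ (μ - γ)
        + lam * s ^ (μ - γ) * (1 - s) ^ lam := by
          have := sub_nonneg.2 hγμ
          gcongr
    _ ≤ (2 * μ - γ + lam) * tauNum μ lam γ TM s := by
          unfold tauNum
          nlinarith [mul_nonneg (mul_nonneg hTM hp.le) (by linarith : 0 ≤ μ - γ + lam),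
            mul_pos hr hq]

lemma capillary_nonneg (hs : s ∈ Ioo 0 1) : 0 ≤ capillary μ lam s := by
  have := sub_pos.2 hs.2
  have := hs.1
  unfold capillary
  positivity

lemma capillary_le_rpow_left (hs : s ∈ Ioo 0 1) : capillary μ lam s ≤ s ^ μ :=
  mul_div_add_le_left (rpow_pos_of_pos hs.1 μ).le (rpow_pos_of_pos (sub_pos.2 hs.2) lam)

lemma capillary_le_rpow_right (hs : s ∈ Ioo 0 1) : capillary μ lam s ≤ (1 - s) ^ lam :=
  mul_div_add_le_right (rpow_pos_of_pos hs.1 μ) (rpow_pos_of_pos (sub_pos.2 hs.2) lam).le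

lemma capillary_le_one (hlam : 0 ≤ lam) (hs : s ∈ Ioo 0 1) : capillary μ lam s ≤ 1 :=
  (capillary_le_rpow_right hs).trans (rpow_le_one (sub_pos.2 hs.2).le (by linarith [hs.1]) hlam)

lemma sqrt_capillary_le_rpow_left (hs : s ∈ Ioo 0 1) : √(capillary μ lam s) ≤ s ^ (μ / 2) :=
  (sqrt_le_sqrt (capillary_le_rpow_left hs)).trans_eq (sqrt_rpow_eq_rpow_half hs.1.le μ)

lemma sqrt_capillary_le_rpow_right (hs : s ∈ Ioo 0 1) :
    √(capillary μ lam s) ≤ (1 - s) ^ (lam / 2) :=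
  (sqrt_le_sqrt (capillary_le_rpow_right hs)).trans_eq
    (sqrt_rpow_eq_rpow_half (sub_pos.2 hs.2).le lam)

lemma abs_sqrt_capillary_mul_div_le (hμ : 2 ≤ μ) (hlam : 2 ≤ lam) (hγμ : γ ≤ μ)
    (hTM : 0 ≤ TM) (hs : s ∈ Ioo 0 1) {f : ℝ → ℝ} {f' : ℝ} (hf : HasDerivAt f f' s)
    (hf_eq : f =ᶠ[𝓝 s] fun x => tauNum μ lam γ TM x / tauDen μ lam x) :
    |√(capillary μ lam s) * f' / f s| ≤ (2 * μ - γ + lam) + (μ + lam) := by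
  have hN := tauNum_pos (μ := μ) (lam := lam) (γ := γ) hTM hs
  have hD := tauDen_pos (μ := μ) (lam := lam) hs
  have hwμ : √(capillary μ lam s) ≤ s ^ (μ / 2) := sqrt_capillary_le_rpow_left hs
  have hwlam : √(capillary μ lam s) ≤ (1 - s) ^ (lam / 2) := sqrt_capillary_le_rpow_right hs
  rw [mul_div_assoc, hf.div_eq_sub_of_eventuallyEq_div hf_eq (hasDerivAt_tauNum hs)
    (hasDerivAt_tauDen hs) hN.ne' hD.ne']
  exact abs_mul_sub_div_le (sqrt_nonneg _) hN hD
    (mul_abs_deriv_tauNum_le hμ hlam hγμ hTM hs (sqrt_nonneg _) hwμ hwlam)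
    (mul_abs_deriv_tauDen_le hμ hlam hs (sqrt_nonneg _) hwμ hwlam)

end

/-- Under hypotheses (H1), (H2), (H6) of the paper (`μ > γ > 2`, `λ > 2`, `T_M > 1`),
the functions `a·τ'/τ`, `√a·τ'/τ` and `a·τ²` are bounded on `(0,1)`,
where `τ'` denotes the derivative of `τ` on `(0,1)`. -/
theorem coefficient_bounds_with_tau_derivative
    (μ lam γ TM : ℝ) (hγ : 2 < γ) (hγμ : γ < μ) (hlam : 2 < lam) (hTM : 1 < TM)
    (a τ τ' : ℝ → ℝ)
    (ha : ∀ s ∈ Set.Ioo (0:ℝ) 1,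
      a s = s ^ μ * (1 - s) ^ lam / (s ^ μ + (1 - s) ^ lam))
    (hτ : ∀ s ∈ Set.Ioo (0:ℝ) 1,
      τ s = (s ^ μ / (s ^ μ + (1 - s) ^ lam)) * (TM + (1 - s) ^ lam / s ^ γ))
    (hτ' : ∀ s ∈ Set.Ioo (0:ℝ) 1, HasDerivAt τ (τ' s) s) :
    ∃ C : ℝ, ∀ s ∈ Set.Ioo (0:ℝ) 1,
      |a s * τ' s / τ s| ≤ C ∧
      |Real.sqrt (a s) * τ' s / τ s| ≤ C ∧
      |a s * (τ s) ^ 2| ≤ C := by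
  have hμ : 2 ≤ μ := by linarith
  have hTM0 : 0 ≤ TM := by linarith
  refine ⟨(2 * μ - γ + lam) + (μ + lam) + TM ^ 2, fun s hs => ?_⟩
  have ha_s : a s = capillary μ lam s := ha s hs
  have hτ_eq : τ =ᶠ[𝓝 s] fun x => tauNum μ lam γ TM x / tauDen μ lam x :=
    eventually_of_mem (Ioo_mem_nhds hs.1 hs.2) fun x hx =>
      (hτ x hx).trans (tau_eq_tauNum_div_tauDen hx)
  have ha0 : 0 ≤ a s := ha_s ▸ capillary_nonneg hs
  have ha1 : a s ≤ 1 := ha_s ▸ capillary_le_one (by linarith) hs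
  have hτ0 : 0 ≤ τ s := hτ_eq.eq_of_nhds ▸ (div_pos (tauNum_pos hTM0 hs) (tauDen_pos hs)).le
  have hτTM : τ s ≤ TM := hτ_eq.eq_of_nhds ▸ tauNum_div_tauDen_le hγμ.le hTM.le hs
  have hsqrt := ha_s ▸ abs_sqrt_capillary_mul_div_le hμ hlam.le hγμ.le hTM0 hs (hτ' s hs) hτ_eq
  have hC : (2 * μ - γ + lam) + (μ + lam) ≤ (2 * μ - γ + lam) + (μ + lam) + TM ^ 2 :=
    le_add_of_nonneg_right (sq_nonneg TM)
  refine ⟨?_, hsqrt.trans hC, (abs_mul_sq_le ha0 ha1 hτ0 hτTM).trans (by linarith)⟩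
  rw [mul_div_assoc] at hsqrt ⊢
  exact (abs_mul_le_abs_sqrt_mul ha0 ha1 _).trans (hsqrt.trans hC)
end

section
/- Let γ > 2, λ > 2, T_M > 1, and fix 0 < S_min ≤ S_max < 1. There exist positive constants C and D, depending only on γ, λ, T_M, S_min, S_max (and in particular independent of ε), such that for every ε ∈ (0, 1/4], every S_D ∈ [S_min, S_max], and every s ∈ ℝ, the regularized entropy satisfies E_ε(s) ≥ C·( Z_ε(s)^{2-γ} + (1 − Z_ε(s))^{2-λ} ) − D. -/
/-- The cutting function `Z(s) = min(max(s,0),1)`. -/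
noncomputable def Z (s : ℝ) : ℝ := min (max s 0) 1

/-- The regularized cutting function `Z_ε(s) = (1−2ε)Z(s) + ε`. -/
noncomputable def Zeps (ε s : ℝ) : ℝ := (1 - 2 * ε) * Z s + ε

/-- The integrand `h_ε(ξ) = Z_ε(ξ)^{-γ} + T_M (1 − Z_ε(ξ))^{-λ}` of the regularized entropy. -/
noncomputable def heps (γ lam TM ε ξ : ℝ) : ℝ :=
  Zeps ε ξ ^ (-γ) + TM * (1 - Zeps ε ξ) ^ (-lam)

/-- The regularized entropy with base point `S_D`:
`E_ε(s) = s ∫_{S_D}^s h_ε(ξ) dξ − ∫_{S_D}^s ξ h_ε(ξ) dξ`. -/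
noncomputable def Eeps (γ lam TM ε SD s : ℝ) : ℝ :=
  s * (∫ ξ in SD..s, heps γ lam TM ε ξ) - ∫ ξ in SD..s, ξ * heps γ lam TM ε ξ


/-! Write `E_ε(s) = ∫_{S_D}^s (s - ξ) h_ε(ξ) dξ`. Then `E_ε ≥ 0`, and `E_ε(s) ≥ K (t - a)² / 2`
whenever `h_ε ≥ K` on an interval `[a, t]` lying between `s` and `S_D`. Let `z = Z_ε(s)` and
`2δ ≤ S_D`. If `s ≤ δ`, then, `Z_ε` being `1`-Lipschitz, `Z_ε ≤ 2z` and hence `h_ε ≥ (2z)^{-γ}` on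
the interval of length `δz` starting at `max(s, 0)`; this gives `E_ε(s) ≥ 2^{-γ} δ² z^{2-γ} / 2`.
If `s ≥ δ`, then `z ≥ δ` and `z^{2-γ} ≤ δ^{2-γ}`. The reflection `ξ ↦ 1 - ξ` exchanges `Z_ε` and
`1 - Z_ε` and turns the estimate near `1` into the same estimate near `0`, with `λ` for `γ`
(this uses `T_M ≥ 1`). -/

open Set intervalIntegral

noncomputable def entropy (f : ℝ → ℝ) (c s : ℝ) : ℝ := ∫ x in c..s, (s - x) * f x

section Entropy

variable {f : ℝ → ℝ} {c s : ℝ}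

theorem entropy_eq_mul_integral_sub (hf : Continuous f) :
    entropy f c s = s * (∫ x in c..s, f x) - ∫ x in c..s, x * f x := by
  rw [← integral_const_mul, ← integral_sub (f := fun x ↦ s * f x) (g := fun x ↦ x * f x)
    ((continuous_const.mul hf).intervalIntegrable _ _)
    ((continuous_id.mul hf).intervalIntegrable _ _)]
  simp only [entropy, sub_mul]

theorem entropy_eq_integral_swap : entropy f c s = ∫ x in s..c, (x - s) * f x := by
  rw [entropy, integral_symm, ← integral_neg]
  simp only [← neg_mul, neg_sub]

theorem entropy_comp_sub_left (d : ℝ) :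
    entropy (fun x ↦ f (d - x)) (d - c) (d - s) = entropy f c s := by
  have h := integral_comp_sub_left (fun y ↦ (y - s) * f y) d (a := d - c) (b := d - s)
  simp only [sub_sub_cancel] at h
  rw [entropy_eq_integral_swap (f := f), ← h, entropy]
  congr 1 with x
  ring_nf

theorem entropy_nonneg (hf : ∀ x, 0 ≤ f x) : 0 ≤ entropy f c s := by
  rcases le_total c s with h | h
  · exact integral_nonneg h fun x hx ↦ mul_nonneg (sub_nonneg.2 hx.2) (hf x)
  · rw [entropy_eq_integral_swap]
    exact integral_nonneg h fun x hx ↦ mul_nonneg (sub_nonneg.2 hx.1) (hf x)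

theorem mul_sq_le_entropy (hf : Continuous f) (hf0 : ∀ x, 0 ≤ f x) {K a t : ℝ}
    (hsa : s ≤ a) (hat : a ≤ t) (htc : t ≤ c) (hK : ∀ x ∈ Icc a t, K ≤ f x) :
    K * (t - a) ^ 2 / 2 ≤ entropy f c s := by
  have hint : ∀ u v, IntervalIntegrable (fun x ↦ (x - s) * f x) MeasureTheory.volume u v :=
    fun u v ↦ ((continuous_sub_right s).mul hf).intervalIntegrable u v
  calc K * (t - a) ^ 2 / 2 = ∫ x in a..t, (x - a) * K := by
        rw [integral_mul_const]
        simp only [integral_comp_sub_right fun x ↦ x, sub_self, integral_id]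
        ring
    _ ≤ ∫ x in a..t, (x - s) * f x := by
        refine integral_mono_on hat
          (((continuous_sub_right a).mul continuous_const).intervalIntegrable a t)
          (hint a t) fun x hx ↦ ?_
        nlinarith [hK x hx, hf0 x, hx.1]
    _ ≤ ∫ x in s..c, (x - s) * f x := by
        refine integral_mono_interval hsa hat htc ?_ (hint s c)
        refine MeasureTheory.ae_restrict_of_forall_mem measurableSet_Ioc fun x hx ↦ ?_
        exact mul_nonneg (sub_nonneg.2 hx.1.le) (hf0 x)
    _ = entropy f c s := entropy_eq_integral_swap.symm

end Entropy

theorem Z_one_sub (s : ℝ) : Z (1 - s) = 1 - Z s := by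
  simp only [Z, min_def, max_def]
  split_ifs <;> linarith

theorem Z_max_zero (s : ℝ) : Z (max s 0) = Z s := by
  simp only [Z, max_assoc, max_self]

theorem Z_le_add {x y : ℝ} (h : x ≤ y) : Z y ≤ Z x + (y - x) := by
  simp only [Z, min_def, max_def]
  split_ifs <;> linarith

section Zeps

variable {ε : ℝ}

theorem Zeps_one_sub (s : ℝ) : Zeps ε (1 - s) = 1 - Zeps ε s := by
  rw [Zeps, Zeps, Z_one_sub]
  ring

theorem Zeps_pos (hε0 : 0 < ε) (hε : ε ≤ 1 / 2) (s : ℝ) : 0 < Zeps ε s := by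
  have hZ : 0 ≤ Z s := le_min (le_max_right s 0) zero_le_one
  simp only [Zeps]
  nlinarith

theorem Zeps_lt_one (hε0 : 0 < ε) (hε : ε ≤ 1 / 2) (s : ℝ) : Zeps ε s < 1 := by
  have := Zeps_pos hε0 hε (1 - s)
  rw [Zeps_one_sub] at this
  linarith

theorem Zeps_le_add (hε0 : 0 ≤ ε) {x y : ℝ} (h : x ≤ y) :
    Zeps ε y ≤ Zeps ε x + (y - x) := by
  have hZ := Z_le_add h
  have hZxy : Z x ≤ Z y := by unfold Z; gcongr
  simp only [Zeps]
  nlinarith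

theorem le_Zeps_of_le (hε0 : 0 ≤ ε) (hε : ε ≤ 1 / 2) {δ s : ℝ} (hδ : δ ≤ 1 / 2) (hs : δ ≤ s) :
    δ ≤ Zeps ε s := by
  have hZ : δ ≤ Z s := le_min (le_max_of_le_left hs) (by linarith)
  simp only [Zeps]
  nlinarith

end Zeps

section Heps

variable {γ lam TM ε : ℝ}

theorem continuous_heps (hε0 : 0 < ε) (hε : ε ≤ 1 / 2) : Continuous (heps γ lam TM ε) := by
  have hZ : Continuous (Zeps ε) := by unfold Zeps Z; fun_prop
  refine (hZ.rpow_const fun x ↦ .inl (Zeps_pos hε0 hε x).ne').add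
    (continuous_const.mul ((continuous_const.sub hZ).rpow_const fun x ↦ .inl ?_))
  exact (sub_pos.2 (Zeps_lt_one hε0 hε x)).ne'

theorem rpow_Zeps_le_heps (hTM : 0 ≤ TM) (hε0 : 0 < ε) (hε : ε ≤ 1 / 2) (x : ℝ) :
    Zeps ε x ^ (-γ) ≤ heps γ lam TM ε x := by
  have := Real.rpow_nonneg (sub_pos.2 (Zeps_lt_one hε0 hε x)).le (-lam)
  rw [heps]
  nlinarith

theorem rpow_Zeps_le_heps_one_sub (hTM : 1 ≤ TM) (hε0 : 0 < ε) (hε : ε ≤ 1 / 2) (x : ℝ) :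
    Zeps ε x ^ (-lam) ≤ heps γ lam TM ε (1 - x) := by
  have h₁ := Real.rpow_nonneg (sub_pos.2 (Zeps_lt_one hε0 hε x)).le (-γ)
  have h₂ := Real.rpow_nonneg (Zeps_pos hε0 hε x).le (-lam)
  rw [heps, Zeps_one_sub, sub_sub_cancel]
  nlinarith

theorem Eeps_eq_entropy (hε0 : 0 < ε) (hε : ε ≤ 1 / 2) (SD s : ℝ) :
    Eeps γ lam TM ε SD s = entropy (heps γ lam TM ε) SD s :=
  (entropy_eq_mul_integral_sub (continuous_heps hε0 hε)).symm

end Heps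

section Bump

variable {f : ℝ → ℝ} {ε p δ c : ℝ}

theorem mul_rpow_Zeps_le_entropy_of_le (hf : Continuous f) (hfZ : ∀ x, Zeps ε x ^ (-p) ≤ f x)
    (hε0 : 0 < ε) (hε : ε ≤ 1 / 2) (hp : 0 ≤ p) (hδ0 : 0 ≤ δ) (hδ1 : δ ≤ 1) (hδc : 2 * δ ≤ c)
    {s : ℝ} (hs : s ≤ δ) :
    2 ^ (-p) * δ ^ 2 / 2 * Zeps ε s ^ (2 - p) ≤ entropy f c s := by
  have hf0 : ∀ x, 0 ≤ f x := fun x ↦ (Real.rpow_nonneg (Zeps_pos hε0 hε x).le _).trans (hfZ x)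
  have hza : Zeps ε (max s 0) = Zeps ε s := by simp only [Zeps, Z_max_zero]
  set z := Zeps ε s
  set a := max s 0
  have hz0 : 0 < z := Zeps_pos hε0 hε s
  have hz1 : z ≤ 1 := (Zeps_lt_one hε0 hε s).le
  have ha : a ≤ δ := max_le hs hδ0
  have hbound : ∀ x ∈ Icc a (a + δ * z), (2 * z) ^ (-p) ≤ f x := fun x hx ↦ by
    have hx2z : Zeps ε x ≤ 2 * z := by
      have := Zeps_le_add hε0.le hx.1
      nlinarith [hx.2]
    exact (Real.rpow_le_rpow_of_nonpos (Zeps_pos hε0 hε x) hx2z (by linarith)).trans (hfZ x)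
  have hac : a + δ * z ≤ c := by nlinarith
  have h := mul_sq_le_entropy hf hf0 (le_max_left s 0)
    (le_add_of_nonneg_right (mul_nonneg hδ0 hz0.le)) hac hbound
  have hsplit : z ^ (2 - p) = z ^ 2 * z ^ (-p) := by
    rw [sub_eq_add_neg, Real.rpow_add hz0, Real.rpow_two]
  convert h using 1
  rw [Real.mul_rpow zero_le_two hz0.le, hsplit]
  ring

theorem mul_rpow_Zeps_le_entropy_add (hf : Continuous f) (hfZ : ∀ x, Zeps ε x ^ (-p) ≤ f x)
    (hε0 : 0 < ε) (hε : ε ≤ 1 / 2) (hp : 2 ≤ p) (hδ0 : 0 < δ) (hδc : 2 * δ ≤ c) (hc : c ≤ 1)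
    (s : ℝ) :
    2 ^ (-p) * δ ^ 2 / 2 * Zeps ε s ^ (2 - p) ≤
      entropy f c s + 2 ^ (-p) * δ ^ 2 / 2 * δ ^ (2 - p) := by
  have hK : 0 ≤ 2 ^ (-p) * δ ^ 2 / 2 := by positivity
  rcases le_total s δ with hs | hs
  · have := mul_rpow_Zeps_le_entropy_of_le hf hfZ hε0 hε (by linarith) hδ0.le (by linarith) hδc hs
    have : 0 ≤ 2 ^ (-p) * δ ^ 2 / 2 * δ ^ (2 - p) := by positivity
    linarith
  · have hf0 : ∀ x, 0 ≤ f x := fun x ↦ (Real.rpow_nonneg (Zeps_pos hε0 hε x).le _).trans (hfZ x)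
    have hZδ : Zeps ε s ^ (2 - p) ≤ δ ^ (2 - p) :=
      Real.rpow_le_rpow_of_nonpos hδ0 (le_Zeps_of_le hε0.le hε (by linarith) hs) (by linarith)
    have := mul_le_mul_of_nonneg_left hZδ hK
    have := entropy_nonneg (c := c) (s := s) hf0
    linarith

end Bump

theorem regularized_entropy_lower_bound_general
    (γ lam TM : ℝ) (hγ : 2 < γ) (hlam : 2 < lam) (hTM : 1 < TM)
    (Smin Smax : ℝ) (h0 : 0 < Smin) (h2 : Smax < 1) :
    ∃ C > (0:ℝ), ∃ D > (0:ℝ),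
      ∀ ε ∈ Set.Ioc (0:ℝ) (1/4), ∀ SD ∈ Set.Icc Smin Smax, ∀ s : ℝ,
        Eeps γ lam TM ε SD s ≥
          C * (Zeps ε s ^ (2 - γ) + (1 - Zeps ε s) ^ (2 - lam)) - D := by
  obtain ⟨δ, hδ0, hδ⟩ : ∃ δ > 0, 2 * δ ≤ Smin := ⟨Smin / 2, by linarith, by linarith⟩
  obtain ⟨η, hη0, hη⟩ : ∃ η > 0, 2 * η ≤ 1 - Smax := ⟨(1 - Smax) / 2, by linarith, by linarith⟩
  have hc₁ : 0 < 2 ^ (-γ) * δ ^ 2 / 2 := by positivity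
  have hc₂ : 0 < 2 ^ (-lam) * η ^ 2 / 2 := by positivity
  have hD : 0 < 2 ^ (-γ) * δ ^ 2 / 2 * δ ^ (2 - γ) + 2 ^ (-lam) * η ^ 2 / 2 * η ^ (2 - lam) := by
    positivity
  set c₁ := 2 ^ (-γ) * δ ^ 2 / 2 with hc₁_def
  set c₂ := 2 ^ (-lam) * η ^ 2 / 2 with hc₂_def
  refine ⟨min c₁ c₂ / 2, half_pos (lt_min hc₁ hc₂), _, half_pos hD, ?_⟩
  rintro ε ⟨hε0, hε⟩ SD ⟨hSD1, hSD2⟩ s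
  have hε' : ε ≤ 1 / 2 := by linarith
  have hA := mul_rpow_Zeps_le_entropy_add (continuous_heps hε0 hε')
    (rpow_Zeps_le_heps (lam := lam) (TM := TM) (by linarith) hε0 hε') hε0 hε' hγ.le hδ0
    (by linarith) (by linarith : SD ≤ 1) s
  have hB := mul_rpow_Zeps_le_entropy_add (f := fun x ↦ heps γ lam TM ε (1 - x))
    ((continuous_heps hε0 hε').comp (continuous_const.sub continuous_id))
    (rpow_Zeps_le_heps_one_sub hTM.le hε0 hε') hε0 hε' hlam.le hη0 (c := 1 - SD) (by linarith)
    (by linarith) (1 - s)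
  rw [entropy_comp_sub_left, Zeps_one_sub] at hB
  rw [← Eeps_eq_entropy hε0 hε', ← hc₁_def] at hA
  rw [← Eeps_eq_entropy hε0 hε', ← hc₂_def] at hB
  have := mul_le_mul_of_nonneg_right (min_le_left c₁ c₂)
    (Real.rpow_nonneg (Zeps_pos hε0 hε' s).le (2 - γ))
  have := mul_le_mul_of_nonneg_right (min_le_right c₁ c₂)
    (Real.rpow_nonneg (sub_pos.2 (Zeps_lt_one hε0 hε' s)).le (2 - lam))
  linarith

/-- The Technical Lemma (Lemma 7.2) of the paper: for `γ > 2`, `λ > 2`, `T_M > 1` and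
`0 < S_min ≤ S_max < 1` there are constants `C, D > 0`, independent of `ε`, such that
for all `ε ∈ (0,1/4]`, `S_D ∈ [S_min, S_max]` and `s ∈ ℝ`,
`E_ε(s) ≥ C (Z_ε(s)^{2−γ} + (1 − Z_ε(s))^{2−λ}) − D`. -/
theorem regularized_entropy_lower_bound
    (γ lam TM : ℝ) (hγ : 2 < γ) (hlam : 2 < lam) (hTM : 1 < TM)
    (Smin Smax : ℝ) (h0 : 0 < Smin) (h1 : Smin ≤ Smax) (h2 : Smax < 1) :
    ∃ C > (0:ℝ), ∃ D > (0:ℝ),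
      ∀ ε ∈ Set.Ioc (0:ℝ) (1/4), ∀ SD ∈ Set.Icc Smin Smax, ∀ s : ℝ,
        Eeps γ lam TM ε SD s ≥
          C * (Zeps ε s ^ (2 - γ) + (1 - Zeps ε s) ^ (2 - lam)) - D :=
  regularized_entropy_lower_bound_general γ lam TM hγ hlam hTM Smin Smax h0 h2
end

section
/- Let γ > 2 and fix 0 < S_min ≤ S_max < 1. There exists a positive constant D depending only on γ, S_min, S_max such that for every ε ∈ (0, 1/4], every S_D ∈ [S_min, S_max], and every s < 0: E_{1,ε}^γ(s) ≥ s²/(2ε^γ) + ε^{2-γ} / ( (1−2ε)² (γ−1)(γ−2) ) − D, where E_{1,ε}^γ(s) = s ∫_{S_D}^s Z_ε(ξ)^{-γ} dξ − ∫_{S_D}^s ξ Z_ε(ξ)^{-γ} dξ. -/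
/-- The first component of the regularized entropy with base point `S_D`:
`E_{1,ε}^γ(s) = s ∫_{S_D}^s Z_ε(ξ)^{-γ} dξ − ∫_{S_D}^s ξ Z_ε(ξ)^{-γ} dξ`. -/
noncomputable def E1 (γ ε SD s : ℝ) : ℝ :=
  s * (∫ ξ in SD..s, Zeps ε ξ ^ (-γ)) - ∫ ξ in SD..s, ξ * Zeps ε ξ ^ (-γ)

/-! Writing `E1 γ ε SD s = ∫_s^{SD} (x - s) Z_ε(x)^{-γ} dx` and splitting at `0`: on `[s, 0]`
the weight is the constant `ε^{-γ}`, which gives exactly `s²/(2ε^γ)`. On `[0, SD]` one may drop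
`-s ≥ 0`, and `∫_0^{SD} x ((1-2ε)x + ε)^{-γ} dx` has an explicit primitive: its lower limit
produces the `ε^{2-γ}` term, and its upper limit is bounded uniformly because
`(1-2ε)SD + ε ≥ Smin/2`. -/

open intervalIntegral Set

theorem integral_mul_rpow_linear {a b c γ : ℝ} (ha : 0 < a) (hb : 0 < b) (hc : 0 ≤ c)
    (hγ₁ : γ ≠ 1) (hγ₂ : γ ≠ 2) :
    ∫ x in (0:ℝ)..c, x * (a * x + b) ^ (-γ) =
      b ^ (2 - γ) / (a ^ 2 * ((γ - 1) * (γ - 2))) - (a * c + b) ^ (2 - γ) / (a ^ 2 * (γ - 2))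
        + b * (a * c + b) ^ (1 - γ) / (a ^ 2 * (γ - 1)) := by
  have hpos : ∀ x ∈ uIcc 0 c, 0 < a * x + b := fun x hx => by
    rw [uIcc_of_le hc] at hx; nlinarith [hx.1]
  have h1 : (1:ℝ) - γ ≠ 0 := sub_ne_zero.2 hγ₁.symm
  have h2 : (2:ℝ) - γ ≠ 0 := sub_ne_zero.2 hγ₂.symm
  have h1' : γ - 1 ≠ 0 := sub_ne_zero.2 hγ₁
  have h2' : γ - 2 ≠ 0 := sub_ne_zero.2 hγ₂
  have hexp : ∀ u : ℝ, u ≠ 0 → u ^ (1 - γ) = u * u ^ (-γ) ∧ u ^ (2 - γ) = u ^ 2 * u ^ (-γ) :=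
    fun u hu => by
      have e1 : u ^ (1 - γ) = u * u ^ (-γ) := by
        rw [show 1 - γ = -γ + 1 by ring, Real.rpow_add_one hu, mul_comm]
      refine ⟨e1, ?_⟩
      rw [show 2 - γ = (1 - γ) + 1 by ring, Real.rpow_add_one hu, e1]
      ring
  let F : ℝ → ℝ := fun x =>
    ((a * x + b) ^ (2 - γ) / (2 - γ) - b * (a * x + b) ^ (1 - γ) / (1 - γ)) / a ^ 2
  have hF : ∀ x ∈ uIcc 0 c, HasDerivAt F (x * (a * x + b) ^ (-γ)) x := fun x hx => by
    have hne := (hpos x hx).ne'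
    have hu : HasDerivAt (fun x => a * x + b) a x := by
      simpa using ((hasDerivAt_id x).const_mul a).add_const b
    refine ((((hu.rpow_const (p := 2 - γ) (.inl hne)).div_const (2 - γ)).sub
      (((hu.rpow_const (p := 1 - γ) (.inl hne)).const_mul b).div_const (1 - γ))).div_const
      (a ^ 2)).congr_deriv ?_
    rw [show (2:ℝ) - γ - 1 = 1 - γ by ring, show (1:ℝ) - γ - 1 = -γ by ring, (hexp _ hne).1]
    field_simp
    ring
  have hcont : ContinuousOn (fun x => x * (a * x + b) ^ (-γ)) (uIcc 0 c) :=
    continuousOn_id.mul (ContinuousOn.rpow_const (by fun_prop) fun x hx => .inl (hpos x hx).ne')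
  rw [integral_eq_sub_of_hasDerivAt hF hcont.intervalIntegrable]
  simp only [F, mul_zero, zero_add, (hexp b hb.ne').1, (hexp b hb.ne').2]
  field_simp
  ring

theorem Zeps_of_nonpos (ε : ℝ) {x : ℝ} (hx : x ≤ 0) : Zeps ε x = ε := by
  simp [Zeps, Z, max_eq_right hx]

theorem Zeps_of_mem_Icc (ε : ℝ) {x : ℝ} (hx : x ∈ Icc 0 1) : Zeps ε x = (1 - 2 * ε) * x + ε := by
  rw [Zeps, Z, max_eq_left hx.1, min_eq_left hx.2]

theorem Zeps_pos_s10 {ε : ℝ} (hε₀ : 0 < ε) (hε₁ : ε < 1) (x : ℝ) : 0 < Zeps ε x := by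
  have hZ₀ : 0 ≤ Z x := le_min (le_max_right x 0) zero_le_one
  have hZ₁ : Z x ≤ 1 := min_le_right _ _
  have hε : 0 < ε * (1 - ε) := mul_pos hε₀ (sub_pos.2 hε₁)
  rw [Zeps]
  nlinarith [mul_nonneg (sub_nonneg.2 hZ₁) (sq_nonneg ε), mul_nonneg hZ₀ (sq_nonneg (1 - ε))]

theorem continuous_Zeps (ε : ℝ) : Continuous (Zeps ε) := by
  unfold Zeps Z; fun_prop

theorem continuous_Zeps_rpow {ε : ℝ} (hε₀ : 0 < ε) (hε₁ : ε < 1) (p : ℝ) :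
    Continuous fun x => Zeps ε x ^ p :=
  (continuous_Zeps ε).rpow_const fun x => .inl (Zeps_pos_s10 hε₀ hε₁ x).ne'

theorem intervalIntegrable_sub_mul_Zeps_rpow {ε : ℝ} (hε₀ : 0 < ε) (hε₁ : ε < 1) (γ s a b : ℝ) :
    IntervalIntegrable (fun x => (x - s) * Zeps ε x ^ (-γ)) MeasureTheory.volume a b :=
  ((continuous_id.sub continuous_const).mul
    (continuous_Zeps_rpow hε₀ hε₁ (-γ))).intervalIntegrable _ _

theorem E1_eq_integral {γ ε : ℝ} (hε₀ : 0 < ε) (hε₁ : ε < 1) (SD s : ℝ) :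
    E1 γ ε SD s = ∫ x in s..SD, (x - s) * Zeps ε x ^ (-γ) := by
  have hf := continuous_Zeps_rpow hε₀ hε₁ (-γ)
  have hA : IntervalIntegrable (fun x => s * Zeps ε x ^ (-γ)) MeasureTheory.volume SD s :=
    (continuous_const.mul hf).intervalIntegrable _ _
  have hB : IntervalIntegrable (fun x => x * Zeps ε x ^ (-γ)) MeasureTheory.volume SD s :=
    (continuous_id.mul hf).intervalIntegrable _ _
  rw [E1, ← integral_const_mul, ← integral_sub hA hB, integral_symm SD s, ← integral_neg]
  congr 1; ext x; ring

theorem integral_sub_mul_Zeps_rpow_of_nonpos {ε : ℝ} (hε : 0 ≤ ε) (γ : ℝ) {s : ℝ} (hs : s ≤ 0) :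
    ∫ x in s..0, (x - s) * Zeps ε x ^ (-γ) = s ^ 2 / (2 * ε ^ γ) := by
  have hconst : EqOn (fun x => (x - s) * Zeps ε x ^ (-γ)) (fun x => (x - s) * ε ^ (-γ))
      (uIcc s 0) := fun x hx => by
    rw [uIcc_of_le hs] at hx
    simp only [Zeps_of_nonpos ε hx.2]
  rw [integral_congr hconst, integral_mul_const, integral_comp_sub_right (fun x => x), integral_id,
    Real.rpow_neg hε]
  ring

theorem le_integral_sub_mul_Zeps_rpow {γ ε SD s : ℝ} (hγ : 2 < γ) (hε₀ : 0 < ε) (hε₁ : ε < 1 / 2)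
    (hSD : SD ∈ Icc 0 1) (hs : s ≤ 0) :
    ε ^ (2 - γ) / ((1 - 2 * ε) ^ 2 * ((γ - 1) * (γ - 2)))
        - ((1 - 2 * ε) * SD + ε) ^ (2 - γ) / ((1 - 2 * ε) ^ 2 * (γ - 2))
      ≤ ∫ x in (0:ℝ)..SD, (x - s) * Zeps ε x ^ (-γ) := by
  have hf := continuous_Zeps_rpow hε₀ (by linarith) (-γ)
  have hlinear : EqOn (fun x => x * Zeps ε x ^ (-γ)) (fun x => x * ((1 - 2 * ε) * x + ε) ^ (-γ))
      (uIcc 0 SD) := fun x hx => by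
    rw [uIcc_of_le hSD.1] at hx
    simp only [Zeps_of_mem_Icc ε ⟨hx.1, hx.2.trans hSD.2⟩]
  calc _ ≤ ∫ x in (0:ℝ)..SD, x * ((1 - 2 * ε) * x + ε) ^ (-γ) := by
        rw [integral_mul_rpow_linear (by linarith) hε₀ hSD.1 (by linarith) (by linarith)]
        have : 0 ≤ ε * ((1 - 2 * ε) * SD + ε) ^ (1 - γ) / ((1 - 2 * ε) ^ 2 * (γ - 1)) := by
          have : 0 ≤ (1 - 2 * ε) * SD := mul_nonneg (by linarith) hSD.1
          have : 0 < γ - 1 := by linarith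
          positivity
        linarith
    _ = ∫ x in (0:ℝ)..SD, x * Zeps ε x ^ (-γ) := (integral_congr hlinear).symm
    _ ≤ ∫ x in (0:ℝ)..SD, (x - s) * Zeps ε x ^ (-γ) := by
        refine integral_mono_on hSD.1 ((continuous_id.mul hf).intervalIntegrable _ _)
          (intervalIntegrable_sub_mul_Zeps_rpow hε₀ (by linarith) γ s _ _) fun x _ => ?_
        have := Real.rpow_nonneg (Zeps_pos_s10 hε₀ (by linarith) x).le (-γ)
        nlinarith

theorem E1_lower_bound_negative_s_general
    (γ : ℝ) (hγ : 2 < γ)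
    (Smin Smax : ℝ) (h0 : 0 < Smin) (h2 : Smax < 1) :
    ∃ D > (0:ℝ),
      ∀ ε ∈ Set.Ioc (0:ℝ) (1/4), ∀ SD ∈ Set.Icc Smin Smax, ∀ s : ℝ, s < 0 →
        E1 γ ε SD s ≥
          s ^ 2 / (2 * ε ^ γ) +
            ε ^ (2 - γ) / ((1 - 2 * ε) ^ 2 * ((γ - 1) * (γ - 2))) - D := by
  have hγ₂ : 0 < γ - 2 := by linarith
  have hM : 0 < (Smin / 2) ^ (2 - γ) := Real.rpow_pos_of_pos (half_pos h0) _
  refine ⟨4 * (Smin / 2) ^ (2 - γ) / (γ - 2), by positivity, ?_⟩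
  rintro ε ⟨hε₀, hε₁⟩ SD ⟨hSD₁, hSD₂⟩ s hs
  have hSD : SD ∈ Icc 0 1 := ⟨h0.le.trans hSD₁, hSD₂.trans h2.le⟩
  have hweight : 1 / 2 ≤ 1 - 2 * ε := by linarith
  have hbase : Smin / 2 ≤ (1 - 2 * ε) * SD + ε := by nlinarith
  have htail : ((1 - 2 * ε) * SD + ε) ^ (2 - γ) / ((1 - 2 * ε) ^ 2 * (γ - 2))
      ≤ 4 * (Smin / 2) ^ (2 - γ) / (γ - 2) := by
    have hpow := Real.rpow_le_rpow_of_nonpos (half_pos h0) hbase (by linarith : 2 - γ ≤ 0)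
    rw [← div_div]
    gcongr
    have hsq : 1 ≤ 4 * (1 - 2 * ε) ^ 2 := by nlinarith
    rw [div_le_iff₀ (by positivity)]
    nlinarith [mul_le_mul_of_nonneg_left hsq hM.le]
  have hg := intervalIntegrable_sub_mul_Zeps_rpow hε₀ (by linarith) γ s
  rw [ge_iff_le, E1_eq_integral hε₀ (by linarith),
    ← integral_add_adjacent_intervals (hg s 0) (hg 0 SD),
    integral_sub_mul_Zeps_rpow_of_nonpos hε₀.le γ hs.le]
  linarith [le_integral_sub_mul_Zeps_rpow hγ hε₀ (by linarith) hSD hs.le]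

/-- The Case 2 lower bound of the Appendix of the paper: for `γ > 2` and
`0 < S_min ≤ S_max < 1` there is a constant `D > 0` depending only on
`γ, S_min, S_max` such that for all `ε ∈ (0,1/4]`, `S_D ∈ [S_min, S_max]` and `s < 0`,
`E_{1,ε}^γ(s) ≥ s²/(2ε^γ) + ε^{2−γ}/((1−2ε)²(γ−1)(γ−2)) − D`. -/
theorem E1_lower_bound_negative_s
    (γ : ℝ) (hγ : 2 < γ)
    (Smin Smax : ℝ) (h0 : 0 < Smin) (h1 : Smin ≤ Smax) (h2 : Smax < 1) :
    ∃ D > (0:ℝ),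
      ∀ ε ∈ Set.Ioc (0:ℝ) (1/4), ∀ SD ∈ Set.Icc Smin Smax, ∀ s : ℝ, s < 0 →
        E1 γ ε SD s ≥
          s ^ 2 / (2 * ε ^ γ) +
            ε ^ (2 - γ) / ((1 - 2 * ε) ^ 2 * ((γ - 1) * (γ - 2))) - D :=
  E1_lower_bound_negative_s_general γ hγ Smin Smax h0 h2
end

section
/- Let λ > 2 and fix 0 < S_min ≤ S_max < 1. There exists a positive constant D depending only on λ, S_min, S_max such that for every ε ∈ (0, 1/4], every S_D ∈ [S_min, S_max], and every s > 1: E_{2,ε}^λ(s) ≥ (s−1)²/(2ε^λ) + ε^{2-λ} / ( (1−2ε)² (λ−1)(λ−2) ) − D, where E_{2,ε}^λ(s) = s ∫_{S_D}^s (1 − Z_ε(ξ))^{-λ} dξ − ∫_{S_D}^s ξ (1 − Z_ε(ξ))^{-λ} dξ. -/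
/-- The second component of the regularized entropy with base point `S_D`:
`E_{2,ε}^λ(s) = s ∫_{S_D}^s (1−Z_ε(ξ))^{-λ} dξ − ∫_{S_D}^s ξ (1−Z_ε(ξ))^{-λ} dξ`. -/
noncomputable def E2 (lam ε SD s : ℝ) : ℝ :=
  s * (∫ ξ in SD..s, (1 - Zeps ε ξ) ^ (-lam)) -
    ∫ ξ in SD..s, ξ * (1 - Zeps ε ξ) ^ (-lam)

/-! Write `E_{2,ε}^λ(s) = ∫_{S_D}^s (s - ξ)(1 - Z_ε(ξ))^{-λ} dξ` and split at `ξ = 1`. On `[1, s]`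
the integrand is `(s - ξ) ε^{-λ}`, which gives `(s - 1)²/(2ε^λ)` exactly. On `[S_D, 1]` replace
`s - ξ` by `1 - ξ` and substitute `u = 1 - Z_ε(ξ) = 1 - ε - (1 - 2ε)ξ`, so that
`u - ε = (1 - 2ε)(1 - ξ)` and the integral becomes `(1 - 2ε)^{-2} ∫_ε^U (u - ε) u^{-λ} du`.
The lower endpoint `u = ε` produces `ε^{2-λ}/((λ-1)(λ-2))`; the upper endpoint
`U ≥ (1 - S_max)/2` costs at most the constant `D = 4((1 - S_max)/2)^{2-λ}/(λ-2)`. -/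

open intervalIntegral

lemma Z_mem_Icc (x : ℝ) : Z x ∈ Set.Icc (0 : ℝ) 1 :=
  ⟨le_min (le_max_right _ _) zero_le_one, min_le_right _ _⟩

lemma Z_of_one_le {x : ℝ} (hx : 1 ≤ x) : Z x = 1 := by
  rw [Z, max_eq_left (by linarith), min_eq_right hx]

lemma Z_of_mem_Icc {x : ℝ} (hx : x ∈ Set.Icc (0 : ℝ) 1) : Z x = x := by
  rw [Z, max_eq_left hx.1, min_eq_left hx.2]

lemma continuous_Z : Continuous Z :=
  (continuous_id.max continuous_const).min continuous_const

lemma le_one_sub_Zeps {ε : ℝ} (hε : ε ≤ 1 / 2) (x : ℝ) : ε ≤ 1 - Zeps ε x := by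
  have := Z_mem_Icc x
  unfold Zeps
  nlinarith [this.2]

lemma one_sub_Zeps_of_one_le (ε : ℝ) {x : ℝ} (hx : 1 ≤ x) : 1 - Zeps ε x = ε := by
  rw [Zeps, Z_of_one_le hx]
  ring

lemma one_sub_Zeps_of_mem_Icc (ε : ℝ) {x : ℝ} (hx : x ∈ Set.Icc (0 : ℝ) 1) :
    1 - Zeps ε x = 1 - ε - (1 - 2 * ε) * x := by
  rw [Zeps, Z_of_mem_Icc hx]
  ring

lemma continuous_one_sub_Zeps_rpow {ε : ℝ} (hε : 0 < ε) (hε' : ε ≤ 1 / 2) (lam : ℝ) :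
    Continuous fun x => (1 - Zeps ε x) ^ (-lam) :=
  (continuous_const.sub ((continuous_const.mul continuous_Z).add continuous_const)).rpow_const
    fun x => Or.inl (hε.trans_le (le_one_sub_Zeps hε' x)).ne'

lemma continuous_sub_mul_one_sub_Zeps_rpow {ε : ℝ} (hε : 0 < ε) (hε' : ε ≤ 1 / 2) (lam s : ℝ) :
    Continuous fun x => (s - x) * (1 - Zeps ε x) ^ (-lam) :=
  (continuous_const.sub continuous_id).mul (continuous_one_sub_Zeps_rpow hε hε' lam)

lemma mul_integral_sub_integral_mul {f : ℝ → ℝ} {a b : ℝ} (s : ℝ)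
    (hf : IntervalIntegrable f MeasureTheory.volume a b)
    (hxf : IntervalIntegrable (fun x => x * f x) MeasureTheory.volume a b) :
    s * (∫ x in a..b, f x) - ∫ x in a..b, x * f x = ∫ x in a..b, (s - x) * f x := by
  rw [← integral_const_mul, ← integral_sub (hf.const_mul s) hxf]
  simp only [sub_mul]

lemma integral_sub_mul_rpow_neg {ε U lam : ℝ} (hε : 0 < ε) (hU : 0 < U)
    (hlam1 : lam ≠ 1) (hlam2 : lam ≠ 2) :
    ∫ u in ε..U, (u - ε) * u ^ (-lam) =
      (U ^ (2 - lam) - ε ^ (2 - lam)) / (2 - lam) -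
        ε * ((U ^ (1 - lam) - ε ^ (1 - lam)) / (1 - lam)) := by
  have h0 : (0 : ℝ) ∉ Set.uIcc ε U := fun h => (lt_min hε hU).not_ge h.1
  have hsplit : ∀ u ∈ Set.uIcc ε U, (u - ε) * u ^ (-lam) = u ^ (1 - lam) - ε * u ^ (-lam) := by
    intro u hu
    have hu0 : 0 < u := (lt_min hε hU).trans_le hu.1
    rw [sub_eq_add_neg 1 lam, Real.rpow_add hu0, Real.rpow_one, sub_mul]
  rw [integral_congr hsplit, integral_sub (intervalIntegrable_rpow (Or.inr h0))
      ((intervalIntegrable_rpow (Or.inr h0)).const_mul ε), integral_const_mul,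
    integral_rpow (Or.inr ⟨by contrapose! hlam2; linarith, h0⟩),
    integral_rpow (Or.inr ⟨by contrapose! hlam1; linarith, h0⟩)]
  ring_nf

lemma le_integral_sub_mul_rpow_neg {ε U lam : ℝ} (hε : 0 < ε) (hU : 0 < U) (hlam : 2 < lam) :
    ε ^ (2 - lam) / ((lam - 1) * (lam - 2)) - U ^ (2 - lam) / (lam - 2) ≤
      ∫ u in ε..U, (u - ε) * u ^ (-lam) := by
  rw [integral_sub_mul_rpow_neg hε hU (by linarith) (by linarith)]
  have hεε : ε * ε ^ (1 - lam) = ε ^ (2 - lam) := by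
    rw [show 2 - lam = 1 + (1 - lam) by ring, Real.rpow_add hε, Real.rpow_one]
  have hrem : 0 ≤ ε * U ^ (1 - lam) / (lam - 1) := by
    have := Real.rpow_pos_of_pos hU (1 - lam)
    have : 0 < lam - 1 := by linarith
    positivity
  have hl1 : 1 - lam ≠ 0 := by linarith
  have hl2 : 2 - lam ≠ 0 := by linarith
  have hl1' : lam - 1 ≠ 0 := by linarith
  have hl2' : lam - 2 ≠ 0 := by linarith
  have key : (U ^ (2 - lam) - ε ^ (2 - lam)) / (2 - lam) -
        ε * ((U ^ (1 - lam) - ε ^ (1 - lam)) / (1 - lam)) =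
      ε ^ (2 - lam) / ((lam - 1) * (lam - 2)) - U ^ (2 - lam) / (lam - 2) +
        ε * U ^ (1 - lam) / (lam - 1) := by
    rw [mul_div_assoc', mul_sub, hεε]
    field_simp
    ring
  linarith

lemma E2_eq_integral {ε : ℝ} (hε : 0 < ε) (hε' : ε ≤ 1 / 2) (lam SD s : ℝ) :
    E2 lam ε SD s = ∫ ξ in SD..s, (s - ξ) * (1 - Zeps ε ξ) ^ (-lam) :=
  have hf := continuous_one_sub_Zeps_rpow hε hε' lam
  mul_integral_sub_integral_mul s (hf.intervalIntegrable _ _)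
    ((continuous_id.mul hf).intervalIntegrable _ _)

lemma integral_sub_mul_one_sub_Zeps_rpow_of_one_le {ε : ℝ} (hε : 0 ≤ ε) (lam : ℝ) {s : ℝ}
    (hs : 1 ≤ s) :
    ∫ ξ in (1 : ℝ)..s, (s - ξ) * (1 - Zeps ε ξ) ^ (-lam) = (s - 1) ^ 2 / (2 * ε ^ lam) := by
  have hconst : ∀ ξ ∈ Set.uIcc 1 s, (s - ξ) * (1 - Zeps ε ξ) ^ (-lam) = (s - ξ) * ε ^ (-lam) := by
    intro ξ hξ
    rw [Set.uIcc_of_le hs] at hξ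
    rw [one_sub_Zeps_of_one_le ε hξ.1]
  rw [integral_congr hconst, integral_mul_const, integral_sub intervalIntegrable_const
      intervalIntegrable_id, integral_const, integral_id, smul_eq_mul, Real.rpow_neg hε]
  field_simp
  ring

lemma integral_one_sub_mul_one_sub_Zeps_rpow {ε : ℝ} (hε : ε < 1 / 2) (lam : ℝ) {SD : ℝ}
    (hSD : SD ∈ Set.Icc (0 : ℝ) 1) :
    ∫ ξ in SD..1, (1 - ξ) * (1 - Zeps ε ξ) ^ (-lam) =
      ((1 - 2 * ε) ^ 2)⁻¹ * ∫ u in ε..1 - ε - (1 - 2 * ε) * SD, (u - ε) * u ^ (-lam) := by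
  have ha : 1 - 2 * ε ≠ 0 := by linarith
  have hsubst : ∀ ξ ∈ Set.uIcc SD 1, (1 - ξ) * (1 - Zeps ε ξ) ^ (-lam) =
      (1 - 2 * ε)⁻¹ * ((1 - ε - (1 - 2 * ε) * ξ - ε) * (1 - ε - (1 - 2 * ε) * ξ) ^ (-lam)) := by
    intro ξ hξ
    rw [Set.uIcc_of_le hSD.2] at hξ
    rw [one_sub_Zeps_of_mem_Icc ε ⟨hSD.1.trans hξ.1, hξ.2⟩,
      show 1 - ε - (1 - 2 * ε) * ξ - ε = (1 - 2 * ε) * (1 - ξ) by ring, mul_assoc,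
      inv_mul_cancel_left₀ ha]
  rw [integral_congr hsubst, integral_const_mul,
    integral_comp_sub_mul (fun u => (u - ε) * u ^ (-lam)) ha (1 - ε), smul_eq_mul,
    show 1 - ε - (1 - 2 * ε) * 1 = ε by ring, ← mul_assoc, ← sq, inv_pow]

lemma le_integral_sub_mul_one_sub_Zeps_rpow_to_one {lam ε SD : ℝ} (hlam : 2 < lam) (hε : 0 < ε)
    (hε' : ε ≤ 1 / 4) (hSD : SD ∈ Set.Ico (0 : ℝ) 1) (s : ℝ) (hs : 1 ≤ s) :
    ε ^ (2 - lam) / ((1 - 2 * ε) ^ 2 * ((lam - 1) * (lam - 2))) -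
        4 * ((1 - SD) / 2) ^ (2 - lam) / (lam - 2) ≤
      ∫ ξ in SD..1, (s - ξ) * (1 - Zeps ε ξ) ^ (-lam) := by
  obtain ⟨hSD0, hSD1⟩ := hSD
  set U := 1 - ε - (1 - 2 * ε) * SD
  have hU : (1 - SD) / 2 ≤ U := by nlinarith
  have hinv : ((1 - 2 * ε) ^ 2)⁻¹ ≤ 4 := by
    rw [inv_le_comm₀ (by nlinarith) (by norm_num)]
    nlinarith
  have hpow : U ^ (2 - lam) ≤ ((1 - SD) / 2) ^ (2 - lam) :=
    Real.rpow_le_rpow_of_nonpos (by linarith) hU (by linarith)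
  have hmain : ((1 - 2 * ε) ^ 2)⁻¹ * (U ^ (2 - lam) / (lam - 2)) ≤
      4 * ((1 - SD) / 2) ^ (2 - lam) / (lam - 2) := by
    rw [← mul_div_assoc]
    exact div_le_div_of_nonneg_right
      (mul_le_mul hinv hpow (Real.rpow_nonneg (by linarith) _) (by norm_num)) (by linarith)
  have hf := continuous_sub_mul_one_sub_Zeps_rpow hε (by linarith) lam
  calc ε ^ (2 - lam) / ((1 - 2 * ε) ^ 2 * ((lam - 1) * (lam - 2))) -
        4 * ((1 - SD) / 2) ^ (2 - lam) / (lam - 2)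
      ≤ ((1 - 2 * ε) ^ 2)⁻¹ *
          (ε ^ (2 - lam) / ((lam - 1) * (lam - 2)) - U ^ (2 - lam) / (lam - 2)) := by
        rw [mul_sub ((1 - 2 * ε) ^ 2)⁻¹, inv_mul_eq_div, div_div,
          mul_comm ((lam - 1) * (lam - 2))]
        linarith
    _ ≤ ((1 - 2 * ε) ^ 2)⁻¹ * ∫ u in ε..U, (u - ε) * u ^ (-lam) :=
        mul_le_mul_of_nonneg_left (le_integral_sub_mul_rpow_neg hε (by linarith) hlam)
          (by positivity)
    _ = ∫ ξ in SD..1, (1 - ξ) * (1 - Zeps ε ξ) ^ (-lam) :=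
        (integral_one_sub_mul_one_sub_Zeps_rpow (by linarith) lam ⟨hSD0, hSD1.le⟩).symm
    _ ≤ ∫ ξ in SD..1, (s - ξ) * (1 - Zeps ε ξ) ^ (-lam) :=
        integral_mono_on hSD1.le ((hf 1).intervalIntegrable _ _) ((hf s).intervalIntegrable _ _)
          fun ξ _ => mul_le_mul_of_nonneg_right (by linarith)
            (Real.rpow_pos_of_pos (hε.trans_le (le_one_sub_Zeps (by linarith) ξ)) _).le

theorem E2_lower_bound_above_one_general
    (lam : ℝ) (hlam : 2 < lam)
    (Smin Smax : ℝ) (h0 : 0 < Smin) (h2 : Smax < 1) :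
    ∃ D > (0:ℝ),
      ∀ ε ∈ Set.Ioc (0:ℝ) (1/4), ∀ SD ∈ Set.Icc Smin Smax, ∀ s : ℝ, 1 < s →
        E2 lam ε SD s ≥
          (s - 1) ^ 2 / (2 * ε ^ lam) +
            ε ^ (2 - lam) / ((1 - 2 * ε) ^ 2 * ((lam - 1) * (lam - 2))) - D := by
  refine ⟨4 * ((1 - Smax) / 2) ^ (2 - lam) / (lam - 2),
    div_pos (mul_pos four_pos (Real.rpow_pos_of_pos (show 0 < (1 - Smax) / 2 by linarith) _))
      (by linarith), ?_⟩
  rintro ε ⟨hε, hε'⟩ SD ⟨hSDmin, hSDmax⟩ s hs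
  have hD : 4 * ((1 - SD) / 2) ^ (2 - lam) / (lam - 2) ≤
      4 * ((1 - Smax) / 2) ^ (2 - lam) / (lam - 2) := by
    refine div_le_div_of_nonneg_right (mul_le_mul_of_nonneg_left ?_ four_pos.le) (by linarith)
    exact Real.rpow_le_rpow_of_nonpos (by linarith) (by linarith) (by linarith)
  have hf := continuous_sub_mul_one_sub_Zeps_rpow hε (by linarith) lam s
  have hhead := le_integral_sub_mul_one_sub_Zeps_rpow_to_one hlam hε hε'
    ⟨(h0.trans_le hSDmin).le, by linarith⟩ s hs.le
  rw [E2_eq_integral hε (by linarith), ← integral_add_adjacent_intervals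
    (hf.intervalIntegrable SD 1) (hf.intervalIntegrable 1 s),
    integral_sub_mul_one_sub_Zeps_rpow_of_one_le hε.le lam hs.le]
  linarith

/-- The Case 3 lower bound of the Appendix of the paper: for `λ > 2` and
`0 < S_min ≤ S_max < 1` there is a constant `D > 0` depending only on
`λ, S_min, S_max` such that for all `ε ∈ (0,1/4]`, `S_D ∈ [S_min, S_max]` and `s > 1`,
`E_{2,ε}^λ(s) ≥ (s−1)²/(2ε^λ) + ε^{2−λ}/((1−2ε)²(λ−1)(λ−2)) − D`. -/
theorem E2_lower_bound_above_one
    (lam : ℝ) (hlam : 2 < lam)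
    (Smin Smax : ℝ) (h0 : 0 < Smin) (h1 : Smin ≤ Smax) (h2 : Smax < 1) :
    ∃ D > (0:ℝ),
      ∀ ε ∈ Set.Ioc (0:ℝ) (1/4), ∀ SD ∈ Set.Icc Smin Smax, ∀ s : ℝ, 1 < s →
        E2 lam ε SD s ≥
          (s - 1) ^ 2 / (2 * ε ^ lam) +
            ε ^ (2 - lam) / ((1 - 2 * ε) ^ 2 * ((lam - 1) * (lam - 2))) - D :=
  E2_lower_bound_above_one_general lam hlam Smin Smax h0 h2
end
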